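/- Let d ≥ 2 and N ≥ 2, set p_i = i·∑_{k=2}^N d^{N−k} for i = 1,…,d−1, and define ψ_1^{(2)}(α) = (1, α^{p_1}, α^{p_2}, …, α^{p_{d−1}}) ∈ ℂ^d. Let V_2 = { ψ_1^{(2)}(α) ⊗ ψ_2(α) ⊗ ⋯ ⊗ ψ_N(α) : α ∈ ℂ } ⊆ (ℂ^d)^{⊗N}. Then the orthogonal complement of span V_2 in (ℂ^d)^{⊗N} is a genuinely entangled subspace of dimension d^N − (2d^{N−1} − 1); equivalently, dim span V_2 = 2d^{N−1} − 1 and every nonzero vector orthogonal to all members of V_2 is genuinely multiparty entangled. -/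

import Mathlib

noncomputable section

/-- The `N`-qudit Hilbert space `(ℂ^d)^{⊗N}`, realized as the Euclidean space whose
coordinates are indexed by tuples of local indices. -/
abbrev QSpace (N d : ℕ) := EuclideanSpace ℂ (Fin N → Fin d)

/-- `v` is biproduct: for some bipartition `S|Sᶜ` of the parties, `v = φ ⊗ χ` with
`φ` a vector on the parties in `S` and `χ` a vector on the parties in `Sᶜ`
(under the canonical factor-reordering isomorphism). -/
def Biproduct {N d : ℕ} (v : QSpace N d) : Prop :=
  ∃ S : Set (Fin N), S.Nonempty ∧ S ≠ Set.univ ∧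
    ∃ (φ : ((i : S) → Fin d) → ℂ) (χ : ((i : ↥Sᶜ) → Fin d) → ℂ),
      ∀ f : Fin N → Fin d, v f = φ (fun i => f i) * χ (fun i => f i)

/-- A vector is genuinely multiparty entangled if it is nonzero and not biproduct. -/
def GME {N d : ℕ} (v : QSpace N d) : Prop :=
  v ≠ 0 ∧ ¬ Biproduct v

/-- A genuinely entangled subspace: all its nonzero vectors are GME. -/
def IsGES {N d : ℕ} (G : Submodule ℂ (QSpace N d)) : Prop :=
  ∀ v ∈ G, v ≠ 0 → GME v

/-- The fully product vector `ψ₁(α) ⊗ ψ₂(α) ⊗ ⋯ ⊗ ψ_N(α)`, where the first-party vector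
`ψ₁(α)` has coordinates `v1 α` and, for `k = 2, …, N` (i.e. party index `i = k - 1 ≥ 1`),
`ψ_k(α) = (1, α^{d^{N-k}}, α^{2·d^{N-k}}, …, α^{(d-1)·d^{N-k}})`. -/
def PsiFam (N d : ℕ) (v1 : ℂ → Fin d → ℂ) (α : ℂ) : QSpace N d :=
  WithLp.toLp 2 fun (f : Fin N → Fin d) => ∏ i : Fin N,
    if (i : ℕ) = 0 then v1 α (f i)
    else α ^ ((f i : ℕ) * d ^ (N - 1 - (i : ℕ)))



open Finset Polynomial

section Digits
variable {d : ℕ}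

variable {d : ℕ}

/-- value of digit string `b` with `k` digits, base `d`, little-endian -/
def dval (d : ℕ) (b : ℕ → ℕ) (k : ℕ) : ℕ := ∑ t ∈ range k, b t * d ^ t

lemma dval_lt (hd : 1 ≤ d) (b : ℕ → ℕ) (hb : ∀ t, b t < d) (k : ℕ) :
    dval d b k < d ^ k := by
  induction k with
  | zero => simp [dval]
  | succ k ih =>
    rw [dval, Finset.sum_range_succ, pow_succ]
    have h1 : b k * d ^ k ≤ (d-1) * d ^ k := Nat.mul_le_mul_right _ (by have := hb k; omega)
    have h2 : d ^ k * d = d ^ k + (d-1) * d^k := by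
      have hh : d = 1 + (d - 1) := by omega
      calc d ^ k * d = d ^ k * (1 + (d-1)) := by rw [← hh]
        _ = d ^ k + (d-1) * d ^ k := by ring
    rw [dval] at ih; omega

lemma dval_succ' (b : ℕ → ℕ) (k : ℕ) :
    dval d b (k+1) = b 0 + d * dval d (fun t => b (t+1)) k := by
  rw [dval, Finset.sum_range_succ']
  simp only [pow_zero, mul_one]
  rw [Nat.add_comm]
  congr 1
  rw [dval, Finset.mul_sum]
  apply Finset.sum_congr rfl
  intro t _
  ring

lemma dval_inj (hd : 1 ≤ d) (b b' : ℕ → ℕ) (hb : ∀ t, b t < d) (hb' : ∀ t, b' t < d)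
    (k : ℕ) (h : dval d b k = dval d b' k) : ∀ t < k, b t = b' t := by
  induction k generalizing b b' with
  | zero => omega
  | succ k ih =>
    rw [dval_succ', dval_succ'] at h
    have h0 : b 0 = b' 0 := by
      have e1 := Nat.add_mul_mod_self_left (b 0) d (dval d (fun t => b (t+1)) k)
      have e2 := Nat.add_mul_mod_self_left (b' 0) d (dval d (fun t => b' (t+1)) k)
      have := hb 0; have := hb' 0
      rw [Nat.mod_eq_of_lt ‹b 0 < d›] at e1
      rw [Nat.mod_eq_of_lt ‹b' 0 < d›] at e2
      rw [h] at e1; omega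
    have htail : dval d (fun t => b (t+1)) k = dval d (fun t => b' (t+1)) k := by
      have hd0 : 0 < d := hd
      have : d * dval d (fun t => b (t+1)) k = d * dval d (fun t => b' (t+1)) k := by omega
      exact Nat.eq_of_mul_eq_mul_left hd0 this
    intro t ht
    rcases Nat.eq_zero_or_pos t with rfl | htpos
    · exact h0
    · have := ih (fun t => b (t+1)) (fun t => b' (t+1)) (fun t => hb _) (fun t => hb' _) htail
        (t-1) (by omega)
      simpa [Nat.sub_add_cancel htpos] using this

lemma dval_surj (hd : 1 ≤ d) (k : ℕ) (x : ℕ) (hx : x < d ^ k) :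
    ∃ b : ℕ → ℕ, (∀ t, b t < d) ∧ dval d b k = x := by
  induction k generalizing x with
  | zero =>
    have hx0 : x = 0 := by simpa using hx
    exact ⟨fun _ => 0, fun _ => hd, by simp [dval, hx0]⟩
  | succ k ih =>
    have hxd : x / d < d ^ k := by
      rw [Nat.div_lt_iff_lt_mul (by omega)]
      rw [pow_succ] at hx; omega
    obtain ⟨b', hb', hval⟩ := ih (x / d) hxd
    refine ⟨fun t => if t = 0 then x % d else b' (t-1), fun t => ?_, ?_⟩
    · by_cases h : t = 0 <;> simp [h, Nat.mod_lt _ (by omega : 0 < d), hb']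
    · rw [dval_succ']
      simp only [if_pos rfl]
      have : (fun t => if t + 1 = 0 then x % d else b' (t+1-1)) = b' := by
        funext t; simp
      rw [this, hval]
      simpa using Nat.mod_add_div x d

lemma dval_mod_lt (hd : 1 ≤ d) (b : ℕ → ℕ) (hb : ∀ t, b t < d) (k m : ℕ) (hm : m < k)
    (hbm : b m = 0) : dval d b k % d ^ (m+1) < d ^ m := by
  have hsplit : dval d b k = dval d b (m+1) + ∑ t ∈ Finset.Ico (m+1) k, b t * d ^ t := by
    rw [dval, dval, Finset.range_eq_Ico, Finset.range_eq_Ico]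
    exact (Finset.sum_Ico_consecutive (fun t => b t * d ^ t) (Nat.zero_le _) (by omega : m+1 ≤ k)).symm
  have hdvd : (d ^ (m+1)) ∣ ∑ t ∈ Finset.Ico (m+1) k, b t * d ^ t := by
    apply Finset.dvd_sum
    intro t ht
    rw [Finset.mem_Ico] at ht
    exact Dvd.dvd.mul_left (pow_dvd_pow d ht.1) _
  have hlow : dval d b (m+1) = dval d b m := by
    rw [dval, Finset.sum_range_succ, hbm, dval]; simp
  have hlt : dval d b m < d ^ m := dval_lt hd b hb m
  obtain ⟨j, hj⟩ := hdvd
  rw [hsplit, hj, hlow, Nat.add_mul_mod_self_left,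
    Nat.mod_eq_of_lt (lt_of_lt_of_le hlt (Nat.pow_le_pow_right (by omega) (by omega)))]
  exact hlt

lemma geom_succ (hd : 1 ≤ d) (k : ℕ) : (d - 1) * (∑ t ∈ range k, d ^ t) + 1 = d ^ k := by
  induction k with
  | zero => simp
  | succ k ih =>
    rw [Finset.sum_range_succ, Nat.mul_add, pow_succ]
    have : (d-1) * d ^ k + d ^ k = d ^ k * d := by
      have hdd : d - 1 + 1 = d := by omega
      calc (d-1) * d^k + d^k = (d-1+1) * d^k := by ring
        _ = d ^ k * d := by rw [hdd]; ring
    omega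

end Digits


lemma geom_succ' (d : ℕ) (hd : 1 ≤ d) (k : ℕ) :
    (d - 1) * (∑ t ∈ range k, d ^ t) + 1 = d ^ k := by
  induction k with
  | zero => simp
  | succ k ih =>
    rw [Finset.sum_range_succ, Nat.mul_add, pow_succ]
    have : (d-1) * d ^ k + d ^ k = d ^ k * d := by
      have hdd : d - 1 + 1 = d := by omega
      calc (d-1) * d^k + d^k = (d-1+1) * d^k := by ring
        _ = d ^ k * d := by rw [hdd]; ring
    omega

lemma Q_mod {d n : ℕ} (hd : 2 ≤ d) (m : ℕ) (hm : m ≤ n) :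
    (∑ t ∈ range (n+1), d ^ t) % d ^ (m+1) = ∑ t ∈ range (m+1), d ^ t := by
  have hsplit : ∑ t ∈ range (n+1), d ^ t
      = ∑ t ∈ range (m+1), d ^ t + ∑ t ∈ Finset.Ico (m+1) (n+1), d ^ t := by
    rw [Finset.range_eq_Ico, Finset.range_eq_Ico]
    exact (Finset.sum_Ico_consecutive (fun t => d ^ t) (Nat.zero_le _) (by omega : m+1 ≤ n+1)).symm
  have hdvd : (d ^ (m+1)) ∣ ∑ t ∈ Finset.Ico (m+1) (n+1), d ^ t := by
    apply Finset.dvd_sum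
    intro t ht
    rw [Finset.mem_Ico] at ht
    exact pow_dvd_pow d ht.1
  obtain ⟨j, hj⟩ := hdvd
  have hQm : ∑ t ∈ range (m+1), d ^ t < d ^ (m+1) := by
    have h1 := geom_succ' d (by omega) (m+1)
    have h2 : (∑ t ∈ range (m+1), d ^ t) ≤ (d-1) * (∑ t ∈ range (m+1), d ^ t) :=
      Nat.le_mul_of_pos_left _ (by omega)
    omega
  rw [hsplit, hj, Nat.add_mul_mod_self_left, Nat.mod_eq_of_lt hQm]

lemma key_core (d a a' x x' Q Qm DM DM1 DN : ℕ)
    (hd : 2 ≤ d)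
    (gQ : (d-1) * Q + 1 = DN)
    (gQm : (d-1) * Qm + 1 = DM1)
    (hdm : DM ≤ Qm)
    (hDMpos : 0 < DM)
    (hQmod : Q % DM1 = Qm)
    (hDM1 : DM * d = DM1)
    (hdvd : DM1 ∣ DN)
    (ha : a < d) (ha' : a' < d) (hx : x < DN) (hx' : x' < DN)
    (hxm : x % DM1 < DM) (hxm' : x' % DM1 < DM)
    (hle : a' ≤ a)
    (heq : a * Q + x = a' * Q + x') : a = a' ∧ x = x' := by
  obtain ⟨c, rfl⟩ : ∃ c, a = a' + c := ⟨a - a', by omega⟩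
  have hexpand : (a' + c) * Q = a' * Q + c * Q := by ring
  have hx'eq : x' = c * Q + x := by omega
  rcases Nat.eq_zero_or_pos c with rfl | hcpos
  · have h0 : (0 : ℕ) * Q = 0 := by ring
    exact ⟨rfl, by omega⟩
  exfalso
  have hcd : c ≤ d - 1 := by omega
  have hQmP : Qm < DM1 := by
    have h2 : Qm ≤ (d-1) * Qm := Nat.le_mul_of_pos_left _ (by omega)
    omega
  have h1 : Q ≡ Qm [MOD DM1] := by
    unfold Nat.ModEq
    rw [hQmod, Nat.mod_eq_of_lt hQmP]
  have h2 : x ≡ x % DM1 [MOD DM1] := (Nat.mod_modEq x DM1).symm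
  have hmodeq : x' % DM1 = (c * Qm + x % DM1) % DM1 := by
    conv_lhs => rw [hx'eq]
    exact Nat.ModEq.add (Nat.ModEq.mul_left c h1) h2
  have hQm_le : Qm ≤ c * Qm := Nat.le_mul_of_pos_left _ hcpos
  rcases lt_or_ge (c * Qm + x % DM1) DM1 with hyP | hyP
  · rw [Nat.mod_eq_of_lt hyP] at hmodeq
    omega
  · have hceq : c = d - 1 := by
      by_contra hne
      have hc2 : c ≤ d - 2 := by omega
      have hcc : c * Qm ≤ (d-2) * Qm := Nat.mul_le_mul_right _ hc2
      have h3 : (d-2) * Qm + Qm = (d-1) * Qm := by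
        have e : d - 2 + 1 = d - 1 := by omega
        calc (d-2) * Qm + Qm = (d-2+1) * Qm := by ring
          _ = (d-1) * Qm := by rw [e]
      omega
    have hcQ : c * Q + 1 = DN := by rw [hceq]; exact gQ
    have hx0 : x = 0 := by omega
    have hx'val : x' + 1 = DN := by omega
    obtain ⟨K, hK⟩ := hdvd
    have hK1 : 1 ≤ K := by
      rcases Nat.eq_zero_or_pos K with h0 | h
      · rw [h0, Nat.mul_zero] at hK; omega
      · exact h
    have hexp : DM1 * K = DM1 * (K-1) + DM1 := by
      rw [← Nat.mul_succ]
      congr 1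
      omega
    have hx'form : x' = (DM1 - 1) + DM1 * (K-1) := by omega
    have hx'modP : x' % DM1 = DM1 - 1 := by
      rw [hx'form, Nat.add_mul_mod_self_left, Nat.mod_eq_of_lt (by omega)]
    have h2d : DM * 2 ≤ DM * d := Nat.mul_le_mul_left _ hd
    omega

lemma digit_key {d n : ℕ} (hd : 2 ≤ d) (m : ℕ) (hm : m ≤ n) (a a' x x' : ℕ)
    (ha : a < d) (ha' : a' < d) (hx : x < d ^ (n+1)) (hx' : x' < d ^ (n+1))
    (hxm : x % d ^ (m+1) < d ^ m) (hxm' : x' % d ^ (m+1) < d ^ m)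
    (heq : a * (∑ t ∈ range (n+1), d ^ t) + x = a' * (∑ t ∈ range (n+1), d ^ t) + x') :
    a = a' ∧ x = x' := by
  have hdm : d ^ m ≤ ∑ t ∈ range (m+1), d ^ t :=
    Finset.single_le_sum (f := fun t => d ^ t) (fun t _ => Nat.zero_le _)
      (Finset.self_mem_range_succ m)
  rcases le_total a' a with hle | hle
  · exact key_core d a a' x x' _ _ (d^m) (d^(m+1)) (d^(n+1)) hd
      (geom_succ' d (by omega) _) (geom_succ' d (by omega) _) hdm (by positivity)
      (Q_mod hd m hm) (pow_succ d m).symm (pow_dvd_pow d (by omega)) ha ha' hx hx'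
      hxm hxm' hle heq
  · have := key_core d a' a x' x _ _ (d^m) (d^(m+1)) (d^(n+1)) hd
      (geom_succ' d (by omega) _) (geom_succ' d (by omega) _) hdm (by positivity)
      (Q_mod hd m hm) (pow_succ d m).symm (pow_dvd_pow d (by omega)) ha' ha hx' hx
      hxm' hxm hle heq.symm
    exact ⟨this.1.symm, this.2.symm⟩


section FinLevel
variable (d n : ℕ)

variable (d n : ℕ)

/-- the common exponent coefficients -/
def cc (i : Fin (n+2)) : ℕ :=
  if (i : ℕ) = 0 then (∑ t ∈ range (n+1), d ^ t) else d ^ (n + 1 - (i : ℕ))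

/-- the total exponent -/
def Ee (f : Fin (n+2) → Fin d) : ℕ := ∑ i, (f i : ℕ) * cc d n i

variable {d n}

/-- digit string (little-endian) of the non-first parties -/
def dg (f : Fin (n+2) → Fin d) (t : ℕ) : ℕ :=
  if h : t ≤ n then (f ⟨n+1-t, by omega⟩ : ℕ) else 0

lemma dg_lt (hd : 1 ≤ d) (f : Fin (n+2) → Fin d) (t : ℕ) : dg f t < d := by
  unfold dg
  split
  · exact (f _).isLt
  · omega

lemma dg_spec (f : Fin (n+2) → Fin d) (i : Fin (n+2)) (hi : (i : ℕ) ≠ 0) :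
    dg f (n + 1 - (i : ℕ)) = f i := by
  have h1 : (i : ℕ) ≤ n + 1 := by omega
  have h2 : n + 1 - (i : ℕ) ≤ n := by omega
  unfold dg
  rw [dif_pos h2]
  have harg : (⟨n + 1 - (n + 1 - (i:ℕ)), by omega⟩ : Fin (n+2)) = i := by
    apply Fin.ext
    simp only [Fin.val_mk]
    omega
  rw [harg]

lemma cc_ne (i : Fin (n+2)) (hi : (i : ℕ) ≠ 0) : cc d n i = d ^ (n + 1 - (i : ℕ)) := by
  rw [cc, if_neg hi]

lemma cc_zero : cc d n 0 = ∑ t ∈ range (n+1), d ^ t := by simp [cc]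

lemma Ee_split (f : Fin (n+2) → Fin d) :
    Ee d n f = (f 0 : ℕ) * (∑ t ∈ range (n+1), d ^ t) + dval d (dg f) (n+1) := by
  rw [Ee, Fin.sum_univ_succ, cc_zero]
  congr 1
  rw [dval]
  refine Finset.sum_nbij' (fun (i : Fin (n+1)) => n - (i : ℕ))
    (fun t => (⟨n - t, by omega⟩ : Fin (n+1))) ?_ ?_ ?_ ?_ ?_
  · intro i _
    simp only [Finset.mem_range]
    omega
  · intro t _
    exact Finset.mem_univ _
  · intro i _
    have := i.isLt
    exact Fin.ext (by simp; omega)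
  · intro t ht
    rw [Finset.mem_range] at ht
    simp only
    omega
  · intro i _
    have hi := i.isLt
    have hival : ((i.succ : Fin (n+2)) : ℕ) = (i : ℕ) + 1 := rfl
    have hne : ((i.succ : Fin (n+2)) : ℕ) ≠ 0 := by omega
    rw [cc_ne _ hne]
    have e1 : dg f (n - (i:ℕ)) = (f i.succ : ℕ) := by
      have h5 : n - (i : ℕ) = n + 1 - ((i.succ : Fin (n+2)) : ℕ) := by omega
      rw [h5, dg_spec f i.succ hne]
    have h2 : n + 1 - ((i.succ : Fin (n+2)) : ℕ) = n - (i : ℕ) := by omega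
    show (f i.succ : ℕ) * d ^ (n + 1 - ((i.succ : Fin (n+2)) : ℕ))
      = dg f (n - (i:ℕ)) * d ^ (n - (i:ℕ))
    rw [h2, e1]

lemma Ee_lt (hd : 2 ≤ d) (f : Fin (n+2) → Fin d) : Ee d n f < 2 * d ^ (n+1) - 1 := by
  rw [Ee_split]
  have h1 : (f 0 : ℕ) * (∑ t ∈ range (n+1), d ^ t) ≤ (d-1) * (∑ t ∈ range (n+1), d ^ t) :=
    Nat.mul_le_mul_right _ (by have := (f 0).isLt; omega)
  have h2 := dval_lt (by omega : 1 ≤ d) (dg f) (dg_lt (by omega) f) (n+1)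
  have h3 := geom_succ' d (by omega) (n+1)
  have h4 : 2 ≤ d ^ (n+1) := le_trans hd (Nat.le_self_pow (by omega) d)
  omega

lemma Ee_surj (hd : 2 ≤ d) (k : ℕ) (hk : k < 2 * d ^ (n+1) - 1) :
    ∃ f : Fin (n+2) → Fin d, Ee d n f = k := by
  have h3 := geom_succ' d (by omega : 1 ≤ d) (n+1)
  obtain ⟨a, x, ha, hx, hax⟩ : ∃ a x : ℕ, a < d ∧ x < d ^ (n+1) ∧
      a * (∑ t ∈ range (n+1), d ^ t) + x = k := by
    rcases lt_or_ge k (d ^ (n+1)) with h | h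
    · exact ⟨0, k, by omega, h, by omega⟩
    · refine ⟨d - 1, k - (d ^ (n+1) - 1), by omega, by omega, by omega⟩
  obtain ⟨b, hb, hbval⟩ := dval_surj (by omega : 1 ≤ d) (n+1) x hx
  set F : Fin (n+2) → Fin d :=
    fun i => if h0 : (i : ℕ) = 0 then ⟨a, ha⟩ else ⟨b (n + 1 - (i : ℕ)), hb _⟩ with hF
  refine ⟨F, ?_⟩
  rw [Ee_split]
  have hf0 : (F 0 : ℕ) = a := by simp [hF]
  rw [hf0]
  have hdg : ∀ t < n+1, dg F t = b t := by
    intro t ht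
    unfold dg
    rw [dif_pos (by omega : t ≤ n)]
    have hne : ((⟨n+1-t, by omega⟩ : Fin (n+2)) : ℕ) ≠ 0 := by
      show n + 1 - t ≠ 0
      omega
    rw [hF]
    simp only [dif_neg hne]
    show b (n + 1 - (n + 1 - t)) = b t
    congr 1
    omega
  have heq2 : dval d (dg F) (n+1) = dval d b (n+1) := by
    rw [dval, dval]
    apply Finset.sum_congr rfl
    intro t ht
    rw [Finset.mem_range] at ht
    rw [hdg t ht]
  rw [heq2, hbval, hax]

/-- injectivity of `Ee` on functions supported on a proper subset `A` -/
lemma Ee_inj (hd : 2 ≤ d) (A : Finset (Fin (n+2))) (hA : A ≠ Finset.univ)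
    {f f' : Fin (n+2) → Fin d} (hf : ∀ i ∉ A, (f i : ℕ) = 0) (hf' : ∀ i ∉ A, (f' i : ℕ) = 0)
    (h : Ee d n f = Ee d n f') : f = f' := by
  obtain ⟨j, hj⟩ : ∃ j, j ∉ A := by
    by_contra hc
    push_neg at hc
    exact hA (Finset.eq_univ_iff_forall.mpr hc)
  rw [Ee_split, Ee_split] at h
  have hdval : (f 0 : ℕ) = (f' 0 : ℕ) ∧ dval d (dg f) (n+1) = dval d (dg f') (n+1) := by
    rcases Nat.eq_zero_or_pos (j : ℕ) with hj0 | hjpos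
    · -- 0 ∉ A : f 0 = f' 0 = 0
      have hj' : j = 0 := Fin.ext hj0
      subst hj'
      rw [hf 0 hj, hf' 0 hj] at h ⊢
      simpa using h
    · -- j ≥ 1 missing from A
      set m := n + 1 - (j : ℕ) with hm
      have hjle : (j : ℕ) ≤ n + 1 := by omega
      have hmn : m ≤ n := by omega
      have hdgm : dg f m = 0 := by
        rw [hm, dg_spec f j (by omega)]
        exact hf j hj
      have hdgm' : dg f' m = 0 := by
        rw [hm, dg_spec f' j (by omega)]
        exact hf' j hj
      exact digit_key hd m hmn _ _ _ _ (f 0).isLt (f' 0).isLt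
        (dval_lt (by omega) _ (dg_lt (by omega) f) _)
        (dval_lt (by omega) _ (dg_lt (by omega) f') _)
        (dval_mod_lt (by omega) _ (dg_lt (by omega) f) _ m (by omega) hdgm)
        (dval_mod_lt (by omega) _ (dg_lt (by omega) f') _ m (by omega) hdgm')
        h
  have hdg_eq : ∀ t < n+1, dg f t = dg f' t :=
    dval_inj (by omega) _ _ (dg_lt (by omega) f) (dg_lt (by omega) f') _ hdval.2
  funext i
  rcases Nat.eq_zero_or_pos (i : ℕ) with hi0 | hipos
  · have : i = 0 := Fin.ext hi0
    subst this
    exact Fin.ext hdval.1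
  · have hne : (i : ℕ) ≠ 0 := by omega
    have hile : (i : ℕ) ≤ n + 1 := by omega
    have := hdg_eq (n + 1 - (i : ℕ)) (by omega)
    rw [dg_spec f i hne, dg_spec f' i hne] at this
    exact Fin.ext this

end FinLevel

section Lin
variable {d n : ℕ}

variable {d n : ℕ}

lemma psi_apply (α : ℂ) (f : Fin (n+2) → Fin d) :
    PsiFam (n+2) d (fun α j => α ^ ((j : ℕ) * ∑ t ∈ Finset.range ((n+2) - 1), d ^ t)) α f
      = α ^ Ee d n f := by
  unfold PsiFam Ee
  simp only [WithLp.ofLp_toLp]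
  rw [← Finset.prod_pow_eq_pow_sum]
  apply Finset.prod_congr rfl
  intro i _
  by_cases h : (i : ℕ) = 0
  · rw [if_pos h, cc, if_pos h]
    rfl
  · rw [if_neg h, cc, if_neg h]
    rfl


variable (d n) in
/-- the polynomial attached to a dual vector -/
noncomputable def Rp (v : QSpace (n+2) d) : ℂ[X] :=
  ∑ f : Fin (n+2) → Fin d, Polynomial.C (v f) * Polynomial.X ^ (Ee d n f)

lemma Rp_coeff (v : QSpace (n+2) d) (k : ℕ) :
    (Rp d n v).coeff k = ∑ f ∈ Finset.univ.filter (fun f => Ee d n f = k), v f := by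
  rw [Rp, Polynomial.finset_sum_coeff, Finset.sum_filter]
  apply Finset.sum_congr rfl
  intro f _
  rw [Polynomial.coeff_C_mul, Polynomial.coeff_X_pow]
  by_cases h : Ee d n f = k
  · rw [if_pos h, if_pos h.symm, mul_one]
  · rw [if_neg h, if_neg (fun hh => h hh.symm), mul_zero]

lemma Rp_eval (v : QSpace (n+2) d) (β : ℂ) :
    (Rp d n v).eval β = ∑ f : Fin (n+2) → Fin d, β ^ (Ee d n f) * v f := by
  rw [Rp, Polynomial.eval_finset_sum]
  apply Finset.sum_congr rfl
  intro f _
  rw [Polynomial.eval_mul, Polynomial.eval_C, Polynomial.eval_pow, Polynomial.eval_X, mul_comm]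

variable (d n) in
noncomputable def Tmap : QSpace (n+2) d →ₗ[ℂ] (Fin (2 * d ^ (n+1) - 1) → ℂ) where
  toFun v := fun e => ∑ f ∈ Finset.univ.filter (fun f => Ee d n f = (e : ℕ)), v f
  map_add' x y := by
    funext e
    simp only [Pi.add_apply, PiLp.add_apply]
    exact Finset.sum_add_distrib
  map_smul' c x := by
    funext e
    simp only [Pi.smul_apply, PiLp.smul_apply, RingHom.id_apply, smul_eq_mul]
    exact Finset.mul_sum _ _ _ |>.symm

lemma mem_orth_iff (hd : 2 ≤ d) (v : QSpace (n+2) d) :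
    v ∈ (Submodule.span ℂ (Set.range
        (PsiFam (n+2) d (fun α j => α ^ ((j : ℕ) * ∑ t ∈ Finset.range ((n+2) - 1), d ^ t)))))ᗮ
    ↔ ∀ β : ℂ, ∑ f : Fin (n+2) → Fin d, β ^ (Ee d n f) * v f = 0 := by
  constructor
  · intro hv β
    have hmem : PsiFam (n+2) d (fun α j => α ^ ((j : ℕ) * ∑ t ∈ Finset.range ((n+2) - 1), d ^ t))
        ((starRingEnd ℂ) β) ∈ Submodule.span ℂ (Set.range
        (PsiFam (n+2) d (fun α j => α ^ ((j : ℕ) * ∑ t ∈ Finset.range ((n+2) - 1), d ^ t)))) :=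
      Submodule.subset_span ⟨_, rfl⟩
    have h0 := (Submodule.mem_orthogonal _ v).mp hv _ hmem
    rw [PiLp.inner_apply] at h0
    simp only [RCLike.inner_apply, psi_apply, map_pow, Complex.conj_conj] at h0
    simpa only [mul_comm] using h0
  · intro hβ
    rw [Submodule.mem_orthogonal]
    intro u hu
    induction hu using Submodule.span_induction with
    | mem u hu =>
      obtain ⟨α, rfl⟩ := hu
      rw [PiLp.inner_apply]
      simp only [RCLike.inner_apply, psi_apply, map_pow]
      simpa only [mul_comm] using hβ ((starRingEnd ℂ) α)
    | zero => exact inner_zero_left v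
    | add x y hx hy hx' hy' => rw [inner_add_left, hx', hy', add_zero]
    | smul c x hx hx' => rw [inner_smul_left, hx', mul_zero]

lemma orth_eq_ker (hd : 2 ≤ d) :
    (Submodule.span ℂ (Set.range
        (PsiFam (n+2) d (fun α j => α ^ ((j : ℕ) * ∑ t ∈ Finset.range ((n+2) - 1), d ^ t)))))ᗮ
      = LinearMap.ker (Tmap d n) := by
  ext v
  rw [mem_orth_iff hd, LinearMap.mem_ker]
  constructor
  · intro hβ
    have hR : Rp d n v = 0 := by
      apply Polynomial.funext
      intro β
      rw [Rp_eval, Polynomial.eval_zero]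
      exact hβ β
    funext e
    have := congrArg (fun p => Polynomial.coeff p (e : ℕ)) hR
    simp only [Polynomial.coeff_zero] at this
    rw [Rp_coeff] at this
    exact this
  · intro hT β
    have hR : Rp d n v = 0 := by
      apply Polynomial.ext
      intro k
      rw [Rp_coeff, Polynomial.coeff_zero]
      rcases lt_or_ge k (2 * d ^ (n+1) - 1) with hk | hk
      · have := congrFun hT ⟨k, hk⟩
        exact this
      · have : Finset.univ.filter (fun f => Ee d n f = k) = ∅ := by
          apply Finset.filter_false_of_mem
          intro f _
          have := Ee_lt hd f
          omega
        rw [this, Finset.sum_empty]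
    have := congrArg (Polynomial.eval β) hR
    rw [Rp_eval, Polynomial.eval_zero] at this
    exact this

lemma Tmap_surj (hd : 2 ≤ d) : LinearMap.range (Tmap d n) = ⊤ := by
  rw [LinearMap.range_eq_top]
  intro w
  have hchoose : ∀ e : Fin (2 * d ^ (n+1) - 1), ∃ f : Fin (n+2) → Fin d, Ee d n f = (e : ℕ) :=
    fun e => Ee_surj hd _ e.isLt
  choose F hF using hchoose
  classical
  refine ⟨∑ e : Fin (2 * d ^ (n+1) - 1), w e • (WithLp.toLp 2 (fun f => if f = F e then (1:ℂ) else 0) : QSpace (n+2) d), ?_⟩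
  rw [map_sum]
  funext e
  rw [Finset.sum_apply]
  have hTδ : ∀ e' e : Fin (2 * d ^ (n+1) - 1),
      Tmap d n (WithLp.toLp 2 (fun f => if f = F e' then (1:ℂ) else 0)) e = if e' = e then (1:ℂ) else 0 := by
    intro e' e
    show ∑ f ∈ Finset.univ.filter (fun f => Ee d n f = (e : ℕ)), (if f = F e' then (1:ℂ) else 0) = _
    rw [Finset.sum_ite_eq' (Finset.univ.filter (fun f => Ee d n f = (e : ℕ))) (F e')
      (fun _ => (1:ℂ))]
    simp only [Finset.mem_filter, Finset.mem_univ, true_and, hF]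
    by_cases h : e' = e
    · rw [if_pos (by rw [h]), if_pos h]
    · rw [if_neg (fun hh => h (Fin.ext hh)), if_neg h]
  calc ∑ e' : Fin (2 * d ^ (n+1) - 1),
        (Tmap d n (w e' • (WithLp.toLp 2 (fun f => if f = F e' then (1:ℂ) else 0) : QSpace (n+2) d))) e
      = ∑ e' : Fin (2 * d ^ (n+1) - 1), w e' * (if e' = e then (1:ℂ) else 0) := by
        apply Finset.sum_congr rfl
        intro e' _
        rw [map_smul, Pi.smul_apply, hTδ e' e, smul_eq_mul]
    _ = w e := by
        simp only [mul_ite, mul_one, mul_zero]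
        rw [Finset.sum_ite_eq' Finset.univ e w]
        simp

end Lin

section GESpart
variable {d n : ℕ}

variable {d n : ℕ}

/-- functions vanishing outside `B` -/
def GG (d n : ℕ) (hd : 2 ≤ d) (B : Finset (Fin (n+2))) : Finset (Fin (n+2) → Fin d) :=
  Finset.univ.filter (fun g => ∀ i ∉ B, g i = (⟨0, by omega⟩ : Fin d))

def ESf (d n : ℕ) (B : Finset (Fin (n+2))) (f : Fin (n+2) → Fin d) : ℕ :=
  ∑ i ∈ B, (f i : ℕ) * cc d n i

lemma Ee_eq_ES (hd : 2 ≤ d) (B : Finset (Fin (n+2))) (g : Fin (n+2) → Fin d)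
    (hg : g ∈ GG d n hd B) : Ee d n g = ESf d n B g := by
  rw [Ee, ESf, ← Finset.sum_filter_add_sum_filter_not Finset.univ (· ∈ B)]
  have h1 : Finset.univ.filter (· ∈ B) = B := by
    ext i; simp
  have h2 : ∑ i ∈ Finset.univ.filter (¬ · ∈ B), (g i : ℕ) * cc d n i = 0 := by
    apply Finset.sum_eq_zero
    intro i hi
    rw [Finset.mem_filter] at hi
    rw [GG, Finset.mem_filter] at hg
    rw [hg.2 i hi.2]
    simp
  rw [h1, h2, add_zero]

lemma poly_kill (hd : 2 ≤ d) (B : Finset (Fin (n+2))) (hB : B ≠ Finset.univ)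
    (ξ : (Fin (n+2) → Fin d) → ℂ)
    (hP : (∑ g ∈ GG d n hd B, Polynomial.C (ξ g) * Polynomial.X ^ (ESf d n B g)) = 0) :
    ∀ g ∈ GG d n hd B, ξ g = 0 := by
  intro g₀ hg₀
  have hinj : ∀ g ∈ GG d n hd B, ESf d n B g = ESf d n B g₀ → g = g₀ := by
    intro g hg hEg
    apply Ee_inj hd B hB (f := g) (f' := g₀)
    · intro i hi
      rw [GG, Finset.mem_filter] at hg
      rw [hg.2 i hi]
    · intro i hi
      rw [GG, Finset.mem_filter] at hg₀
      rw [hg₀.2 i hi]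
    · rw [Ee_eq_ES hd B g hg, Ee_eq_ES hd B g₀ hg₀, hEg]
  have hcoeff := congrArg (fun p => Polynomial.coeff p (ESf d n B g₀)) hP
  simp only [Polynomial.coeff_zero] at hcoeff
  rw [Polynomial.finset_sum_coeff] at hcoeff
  have : ∑ g ∈ GG d n hd B, (Polynomial.C (ξ g) * Polynomial.X ^ (ESf d n B g)).coeff
      (ESf d n B g₀) = ξ g₀ := by
    rw [Finset.sum_eq_single g₀]
    · rw [Polynomial.coeff_C_mul, Polynomial.coeff_X_pow, if_pos rfl, mul_one]
    · intro g hg hne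
      rw [Polynomial.coeff_C_mul, Polynomial.coeff_X_pow]
      rw [if_neg, mul_zero]
      intro hEg
      exact hne (hinj g hg hEg.symm)
    · intro h
      exact absurd hg₀ h
  rw [this] at hcoeff
  exact hcoeff

lemma not_biproduct (hd : 2 ≤ d) (v : QSpace (n+2) d)
    (hv : ∀ β : ℂ, ∑ f : Fin (n+2) → Fin d, β ^ (Ee d n f) * v f = 0)
    (hb : Biproduct v) : v = 0 := by
  classical
  obtain ⟨S, hSne, hSuniv, φ, χ, hform⟩ := hb
  set A : Finset (Fin (n+2)) := Finset.univ.filter (· ∈ S) with hAdef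
  have hmemA : ∀ i, i ∈ A ↔ i ∈ S := by intro i; simp [hAdef]
  have hA_ne : A ≠ Finset.univ := by
    intro h
    apply hSuniv
    apply Set.eq_univ_iff_forall.mpr
    intro i
    exact (hmemA i).mp (h ▸ Finset.mem_univ i)
  have hAc_ne : Aᶜ ≠ Finset.univ := by
    obtain ⟨i, hi⟩ := hSne
    intro h
    have h2 : i ∈ Aᶜ := h ▸ Finset.mem_univ i
    rw [Finset.mem_compl] at h2
    exact h2 ((hmemA i).mpr hi)
  set z : Fin d := (⟨0, by omega⟩ : Fin d) with hz
  set Φ : (Fin (n+2) → Fin d) → ℂ := fun f => φ (fun i => f i) with hΦ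
  set Ξ : (Fin (n+2) → Fin d) → ℂ := fun f => χ (fun i => f i) with hΞ
  -- merge and restriction maps
  set merge : (Fin (n+2) → Fin d) → (Fin (n+2) → Fin d) → (Fin (n+2) → Fin d) :=
    fun g h => fun i => if i ∈ A then g i else h i with hmerge
  have hΦ_merge : ∀ g h, Φ (merge g h) = Φ g := by
    intro g h
    simp only [hΦ]
    congr 1
    funext i
    have hh : (↑i : Fin (n+2)) ∈ A := (hmemA ↑i).mpr i.2
    simp [hmerge, hh]
  have hΞ_merge : ∀ g h, Ξ (merge g h) = Ξ h := by
    intro g h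
    simp only [hΞ]
    congr 1
    funext i
    have h3 : (↑i : Fin (n+2)) ∉ S := i.2
    have h2 : (↑i : Fin (n+2)) ∉ A := fun hc => h3 ((hmemA _).mp hc)
    simp [hmerge, h2]
  have hES_mergeA : ∀ g h, ESf d n A (merge g h) = ESf d n A g := by
    intro g h
    apply Finset.sum_congr rfl
    intro i hi
    simp [hmerge, hi]
  have hES_mergeAc : ∀ g h, ESf d n Aᶜ (merge g h) = ESf d n Aᶜ h := by
    intro g h
    apply Finset.sum_congr rfl
    intro i hi
    rw [Finset.mem_compl] at hi
    simp [hmerge, hi]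
  have hEe_split : ∀ f, Ee d n f = ESf d n A f + ESf d n Aᶜ f := by
    intro f
    rw [Ee, ESf, ESf, Finset.sum_add_sum_compl]
  -- the two polynomials
  set PA : Polynomial ℂ := ∑ g ∈ GG d n hd A, Polynomial.C (Φ g) * Polynomial.X ^ (ESf d n A g)
    with hPA
  set PB : Polynomial ℂ := ∑ h ∈ GG d n hd Aᶜ, Polynomial.C (Ξ h) * Polynomial.X ^ (ESf d n Aᶜ h)
    with hPB
  have hfact : ∀ β : ℂ, PA.eval β * PB.eval β = 0 := by
    intro β
    have hevalA : PA.eval β = ∑ g ∈ GG d n hd A, Φ g * β ^ (ESf d n A g) := by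
      rw [hPA, Polynomial.eval_finset_sum]
      apply Finset.sum_congr rfl
      intro g _
      rw [Polynomial.eval_mul, Polynomial.eval_C, Polynomial.eval_pow, Polynomial.eval_X]
    have hevalB : PB.eval β = ∑ h ∈ GG d n hd Aᶜ, Ξ h * β ^ (ESf d n Aᶜ h) := by
      rw [hPB, Polynomial.eval_finset_sum]
      apply Finset.sum_congr rfl
      intro g _
      rw [Polynomial.eval_mul, Polynomial.eval_C, Polynomial.eval_pow, Polynomial.eval_X]
    rw [hevalA, hevalB, Finset.sum_mul_sum]
    rw [← hv β]
    rw [← Finset.sum_product']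
    refine Finset.sum_nbij' (fun p => merge p.1 p.2) (fun f => (fun i => if i ∈ A then f i else z,
      fun i => if i ∈ Aᶜ then f i else z)) ?_ ?_ ?_ ?_ ?_
    · intro p _
      exact Finset.mem_univ _
    · intro f _
      rw [Finset.mem_product]
      constructor
      · rw [GG, Finset.mem_filter]
        exact ⟨Finset.mem_univ _, fun i hi => by simp [hi, hz]⟩
      · rw [GG, Finset.mem_filter]
        exact ⟨Finset.mem_univ _, fun i hi => by simp [hi, hz]⟩
    · intro p hp
      rw [Finset.mem_product] at hp
      obtain ⟨hp1, hp2⟩ := hp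
      rw [GG, Finset.mem_filter] at hp1 hp2
      ext i : 2
      · by_cases hi : i ∈ A
        · simp [hmerge, hi]
        · simp [hmerge, hi, hp1.2 i hi, hz]
      · by_cases hi : i ∈ Aᶜ
        · have hi' : i ∉ A := Finset.mem_compl.mp hi
          simp [hmerge, hi, hi']
        · have hi' : i ∈ A := by
            rw [Finset.mem_compl] at hi
            push_neg at hi
            exact hi
          simp [hmerge, hi, hi', hp2.2 i (by rwa [Finset.mem_compl, not_not]), hz]
    · intro f _
      funext i
      by_cases hi : i ∈ A
      · simp [hmerge, hi]
      · simp [hmerge, hi]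
    · intro p hp
      rw [Finset.mem_product] at hp
      -- summand equality
      show Φ p.1 * β ^ (ESf d n A p.1) * (Ξ p.2 * β ^ (ESf d n Aᶜ p.2))
          = β ^ (Ee d n (merge p.1 p.2)) * v (merge p.1 p.2)
      rw [hform (merge p.1 p.2)]
      have e1 : φ (fun i => (merge p.1 p.2) i) = Φ (merge p.1 p.2) := rfl
      have e2 : χ (fun i => (merge p.1 p.2) i) = Ξ (merge p.1 p.2) := rfl
      rw [e1, e2, hΦ_merge, hΞ_merge, hEe_split, hES_mergeA, hES_mergeAc, pow_add]
      ring
  have hPAB : PA * PB = 0 := by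
    apply Polynomial.funext
    intro β
    rw [Polynomial.eval_mul, Polynomial.eval_zero]
    exact hfact β
  rcases mul_eq_zero.mp hPAB with hPA0 | hPB0
  · have hkill := poly_kill hd A hA_ne Φ hPA0
    ext f
    rw [hform f]
    have hmem : (fun i => if i ∈ A then f i else z) ∈ GG d n hd A := by
      rw [GG, Finset.mem_filter]
      exact ⟨Finset.mem_univ _, fun i hi => by simp [hi, hz]⟩
    have hΦf : φ (fun i => f i) = Φ (fun i => if i ∈ A then f i else z) := by
      simp only [hΦ]
      congr 1
      funext i
      have hh : (↑i : Fin (n+2)) ∈ A := (hmemA ↑i).mpr i.2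
      simp [hh]
    rw [hΦf, hkill _ hmem, zero_mul]
    rfl
  · have hkill := poly_kill hd Aᶜ hAc_ne Ξ hPB0
    ext f
    rw [hform f]
    have hmem : (fun i => if i ∈ Aᶜ then f i else z) ∈ GG d n hd Aᶜ := by
      rw [GG, Finset.mem_filter]
      exact ⟨Finset.mem_univ _, fun i hi => by simp [hi, hz]⟩
    have hΞf : χ (fun i => f i) = Ξ (fun i => if i ∈ Aᶜ then f i else z) := by
      simp only [hΞ]
      congr 1
      funext i
      have h3 : (↑i : Fin (n+2)) ∉ S := i.2
      have h2 : (↑i : Fin (n+2)) ∈ Aᶜ := by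
        rw [Finset.mem_compl]
        intro hc
        exact h3 ((hmemA _).mp hc)
      simp [h2]
    rw [hΞf, hkill _ hmem, mul_zero]
    rfl

end GESpart

/-- With `p_i = i·∑_{k=2}^N d^{N-k}` and
`ψ₁⁽²⁾(α) = (1, α^{p_1}, …, α^{p_{d-1}})`, the orthocomplement of the span of
`V₂ = {ψ₁⁽²⁾(α) ⊗ ψ₂(α) ⊗ ⋯ ⊗ ψ_N(α) : α ∈ ℂ}` is a GES of dimension
`d^N - (2d^{N-1} - 1)`; equivalently, the span of `V₂` has dimension `2d^{N-1} - 1`. -/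
theorem stmt4 (N d : ℕ) (hd : 2 ≤ d) (hN : 2 ≤ N) :
    IsGES (Submodule.span ℂ (Set.range
        (PsiFam N d (fun α j => α ^ ((j : ℕ) * ∑ t ∈ Finset.range (N - 1), d ^ t)))))ᗮ ∧
    Module.finrank ℂ (Submodule.span ℂ (Set.range
        (PsiFam N d (fun α j => α ^ ((j : ℕ) * ∑ t ∈ Finset.range (N - 1), d ^ t)))))ᗮ
      = d ^ N - (2 * d ^ (N - 1) - 1) ∧
    Module.finrank ℂ (Submodule.span ℂ (Set.range
        (PsiFam N d (fun α j => α ^ ((j : ℕ) * ∑ t ∈ Finset.range (N - 1), d ^ t)))))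
      = 2 * d ^ (N - 1) - 1 := by
  obtain ⟨n, rfl⟩ : ∃ n, N = n + 2 := ⟨N - 2, by omega⟩
  set Vsp := Submodule.span ℂ (Set.range
      (PsiFam (n+2) d (fun α j => α ^ ((j : ℕ) * ∑ t ∈ Finset.range ((n+2) - 1), d ^ t))))
    with hVsp
  have horth := orth_eq_ker (d := d) (n := n) hd
  have hsurj := Tmap_surj (d := d) (n := n) hd
  have hrn := LinearMap.finrank_range_add_finrank_ker (Tmap d n)
  have hrange : Module.finrank ℂ (LinearMap.range (Tmap d n)) = 2 * d ^ (n+1) - 1 := by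
    rw [hsurj, finrank_top, Module.finrank_fin_fun]
  have hspace : Module.finrank ℂ (QSpace (n+2) d) = d ^ (n+2) := by
    rw [finrank_euclideanSpace]
    simp [Fintype.card_fun]
  have hker : Module.finrank ℂ (LinearMap.ker (Tmap d n)) = d ^ (n+2) - (2*d^(n+1) - 1) := by
    omega
  have hWrank : Module.finrank ℂ Vspᗮ = d ^ (n+2) - (2*d^(n+1)-1) := by
    rw [hVsp, horth]
    exact hker
  have hMle : 2 * d ^ (n+1) - 1 ≤ d ^ (n+2) := by
    have h1 : d ^ (n+2) = d ^ (n+1) * d := pow_succ d (n+1)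
    have h2 : 1 ≤ d ^ (n+1) := Nat.one_le_pow _ _ (by omega)
    have h3 : d ^ (n+1) * 2 ≤ d ^ (n+1) * d := Nat.mul_le_mul_left _ hd
    omega
  have htotal := Submodule.finrank_add_finrank_orthogonal (K := Vsp)
  refine ⟨?_, ?_, ?_⟩
  · intro v hv hv0
    exact ⟨hv0, fun hb => hv0 (not_biproduct hd v ((mem_orth_iff hd v).mp hv) hb)⟩
  · show Module.finrank ℂ Vspᗮ = d ^ (n+2) - (2 * d ^ (n+1) - 1)
    exact hWrank
  · show Module.finrank ℂ Vsp = 2 * d ^ (n+1) - 1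
    omega
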